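/- arXiv:2005.10651 — 4 statements merged into one kernel-verified Lean document; each statement's English description precedes it below -/
import Mathlib

section
/- Let Z : ℝⁿ → ℝ² be a surjective linear map and C ⊂ ℝⁿ a closed strict convex cone such that the restriction of Z to C is a proper map. Then Z(C) is a closed strict sector in ℝ² (i.e., a closed cone in ℝ² containing no line). -/
/-- the image under a surjective linear map Z : ℝⁿ → ℝ² of a closed strict
convex cone on which Z is proper is a closed strict sector. -/
theorem stmt2 {n : ℕ} (Z : (Fin n → ℝ) →ₗ[ℝ] (Fin 2 → ℝ)) (hsurj : Function.Surjective Z)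
    (C : Set (Fin n → ℝ)) (hclosed : IsClosed C) (hconv : Convex ℝ C)
    (hcone : ∀ r : ℝ, 0 < r → ∀ x ∈ C, r • x ∈ C)
    (hstrict : ∀ x ∈ C, -x ∈ C → x = 0)
    (hproper : ∀ K : Set (Fin 2 → ℝ), IsCompact K → IsCompact (C ∩ Z ⁻¹' K)) :
    IsClosed (Z '' C) ∧ (∀ r : ℝ, 0 < r → ∀ y ∈ Z '' C, r • y ∈ Z '' C) ∧
      ∀ y ∈ Z '' C, -y ∈ Z '' C → y = 0 := by
  have hZc : Continuous Z := Z.continuous_of_finiteDimensional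
  -- kernel trivial on C
  have hker : ∀ x ∈ C, Z x = 0 → x = 0 := by
    intro x hx hZx
    by_contra hx0
    have hcpt : IsCompact (C ∩ Z ⁻¹' {0}) := hproper {0} isCompact_singleton
    obtain ⟨R, hR⟩ := hcpt.isBounded.subset_ball 0
    have hxn : (0:ℝ) < ‖x‖ := norm_pos_iff.2 hx0
    set r : ℝ := (|R| + 1) / ‖x‖ with hr
    have hrpos : 0 < r := by positivity
    have hmem : r • x ∈ C ∩ Z ⁻¹' {0} := by
      refine ⟨hcone r hrpos x hx, ?_⟩
      simp [Set.mem_preimage, map_smul, hZx]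
    have := hR hmem
    rw [Metric.mem_ball, dist_zero_right, norm_smul, Real.norm_eq_abs,
      abs_of_pos hrpos, hr, div_mul_cancel₀ _ (ne_of_gt hxn)] at this
    have : |R| + 1 < |R| + 1 := lt_of_lt_of_le this (le_trans (le_abs_self R) (by linarith))
    exact lt_irrefl _ this
  -- additivity
  have hadd : ∀ x ∈ C, ∀ y ∈ C, x + y ∈ C := by
    intro x hx y hy
    have h2 : (2:ℝ) • ((1/2 : ℝ) • x + (1/2 : ℝ) • y) ∈ C := by
      apply hcone 2 (by norm_num)
      exact hconv hx hy (by norm_num) (by norm_num) (by norm_num)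
    convert h2 using 1
    rw [smul_add, smul_smul, smul_smul]
    norm_num
  refine ⟨?_, ?_, ?_⟩
  · -- closedness via proper map
    let f : C → (Fin 2 → ℝ) := fun x => Z x
    have hfc : Continuous f := hZc.comp continuous_subtype_val
    have hfp : IsProperMap f := by
      rw [isProperMap_iff_isCompact_preimage]
      refine ⟨hfc, fun K hK => ?_⟩
      rw [Subtype.isCompact_iff]
      convert hproper K hK using 1
      ext x
      simp only [f, Set.mem_image, Set.mem_preimage, Set.mem_inter_iff,
        Subtype.exists, exists_and_right, exists_eq_right]
      constructor
      · rintro ⟨hx, hZx⟩; exact ⟨hx, hZx⟩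
      · rintro ⟨hx, hZx⟩; exact ⟨hx, hZx⟩
    have := hfp.isClosedMap.isClosed_range
    convert this using 1
    ext y
    simp only [f, Set.mem_range, Set.mem_image, Subtype.exists]
    constructor
    · rintro ⟨x, hx, rfl⟩; exact ⟨x, hx, rfl⟩
    · rintro ⟨x, hx, rfl⟩; exact ⟨x, hx, rfl⟩
  · rintro r hr y ⟨x, hx, rfl⟩
    exact ⟨r • x, hcone r hr x hx, map_smul Z r x⟩
  · rintro y ⟨x, hx, rfl⟩ ⟨x', hx', hx'e⟩
    have hsum : x + x' ∈ C := hadd x hx x' hx'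
    have hZsum : Z (x + x') = 0 := by
      rw [map_add, hx'e]; abel
    have hx0 : x + x' = 0 := hker _ hsum hZsum
    have hxe : x' = -x := by
      have := congrArg (fun v => v - x) hx0
      simpa [add_sub_cancel_left] using eq_neg_of_add_eq_zero_right hx0
    have : x = 0 := hstrict x hx (hxe ▸ hx')
    rw [this, map_zero]
end

section
/- Let a₁, a₂, …, aₙ be integers with a₁ > 0, a₂ < 0, and let d = gcd(a₁, a₂). Then there exists a matrix in GL(n, ℤ) transforming the linear form Z(x) = ∑ᵢ aᵢxᵢ into the form a·x₁ − b·x₂ with a, b positive integers. -/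
set_option maxHeartbeats 1000000

/-- an integral linear form with a₁ > 0, a₂ < 0 can be transformed by a
GL(n,ℤ) matrix into the form a·x₁ − b·x₂ with a, b positive integers. -/
theorem stmt6 {n : ℕ} (hn : 2 ≤ n) (aVec : Fin n → ℤ)
    (h1 : 0 < aVec ⟨0, by omega⟩) (h2 : aVec ⟨1, by omega⟩ < 0) :
    ∃ M : Matrix (Fin n) (Fin n) ℤ, IsUnit M.det ∧
      ∃ a b : ℤ, 0 < a ∧ 0 < b ∧
        ∀ x : Fin n → ℤ,
          ∑ i, aVec i * (M.mulVec x) i = a * x ⟨0, by omega⟩ - b * x ⟨1, by omega⟩ := by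
  set i0 : Fin n := ⟨0, by omega⟩ with hi0
  set i1 : Fin n := ⟨1, by omega⟩ with hi1
  have hne : i1 ≠ i0 := by simp [hi0, hi1, Fin.ext_iff]
  -- the linear form
  let f : (Fin n → ℤ) →ₗ[ℤ] ℤ :=
    { toFun := fun x => ∑ i, aVec i * x i
      map_add' := by intro x y; simp [mul_add, Finset.sum_add_distrib]
      map_smul' := by intro c x; simp [Finset.mul_sum, smul_eq_mul]; congr 1; funext i; ring }
  have hf : ∀ x, f x = ∑ i, aVec i * x i := fun x => rfl
  -- generator of the range
  set K := LinearMap.ker f with hK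
  obtain ⟨g0, hg0⟩ := (Submodule.IsPrincipal.principal (LinearMap.range f))
  have hdvd : ∀ x, g0 ∣ f x := by
    intro x
    have : f x ∈ LinearMap.range f := ⟨x, rfl⟩
    rw [hg0, Submodule.mem_span_singleton] at this
    obtain ⟨c, hc⟩ := this
    exact ⟨c, by rw [← hc, smul_eq_mul, mul_comm]⟩
  have hfe : f (Pi.single i0 1) = aVec i0 := by
    rw [hf]
    rw [Finset.sum_eq_single i0]
    · simp
    · intro b _ hb; simp [Pi.single_apply, hb]
    · simp
  have hg0ne : g0 ≠ 0 := by
    intro h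
    have := hdvd (Pi.single i0 1)
    rw [h, zero_dvd_iff, hfe] at this
    omega
  set g : ℤ := |g0| with hg
  have hgpos : 0 < g := abs_pos.mpr hg0ne
  have hgdvd : ∀ x, g ∣ f x := fun x => (abs_dvd _ _).mpr (hdvd x)
  have hgrange : g ∈ LinearMap.range f := by
    rw [hg0, Submodule.mem_span_singleton]
    rcases abs_choice g0 with h | h
    · exact ⟨1, by simp [hg, h]⟩
    · exact ⟨-1, by simp [hg, h]⟩
  obtain ⟨v, hv⟩ := hgrange
  -- basis of kernel
  obtain ⟨m, bK⟩ := Submodule.basisOfPid (Pi.basisFun ℤ (Fin n)) K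
  have hli : ∀ (c : ℤ), ∀ x ∈ K, c • v + x = 0 → c = 0 := by
    intro c x hx hcx
    have := congrArg f hcx
    rw [map_add, map_smul, hv] at this
    rw [hK, LinearMap.mem_ker] at hx
    rw [hx] at this
    simp [smul_eq_mul] at this
    rcases this with h | h
    · exact h
    · omega
  have hsp : ∀ z : Fin n → ℤ, ∃ c : ℤ, z + c • v ∈ K := by
    intro z
    refine ⟨-(f z / g), ?_⟩
    rw [hK, LinearMap.mem_ker, map_add, map_smul, hv, smul_eq_mul]
    have h := Int.ediv_mul_cancel (hgdvd z)
    rw [neg_mul, h]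
    ring
  let B : Module.Basis (Fin (m + 1)) ℤ (Fin n → ℤ) := Module.Basis.mkFinCons v bK hli hsp
  have hmn : m + 1 = n := by
    have e := B.indexEquiv (Pi.basisFun ℤ (Fin n))
    simpa using Fintype.card_congr e
  let B' : Module.Basis (Fin n) ℤ (Fin n → ℤ) := B.reindex (finCongr hmn)
  have hBc : ⇑B = Fin.cons v (K.subtype ∘ bK) := Module.Basis.coe_mkFinCons v bK hli hsp
  have hB'0 : B' i0 = v := by
    have h1 : B' i0 = B ((finCongr hmn).symm i0) := B.reindex_apply _ _
    have h2 : (finCongr hmn).symm i0 = (0 : Fin (m+1)) := by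
      simp [Fin.ext_iff, hi0]
    rw [h1, h2, hBc, Fin.cons_zero]
  have hB'ker : ∀ j : Fin n, j ≠ i0 → B' j ∈ K := by
    intro j hj
    have h1 : B' j = B ((finCongr hmn).symm j) := B.reindex_apply _ _
    set jj : Fin (m + 1) := (finCongr hmn).symm j with hjj
    have hjjne : jj ≠ 0 := by
      intro h
      apply hj
      have h3 : j = finCongr hmn jj := by simp [hjj]
      rw [h3, h]
      simp [Fin.ext_iff, hi0]
    obtain ⟨p, hp⟩ := Fin.eq_succ_of_ne_zero hjjne
    rw [h1, hp, hBc, Fin.cons_succ]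
    exact (bK p).2
  -- shear equivalence
  let S : (Fin n → ℤ) ≃ₗ[ℤ] (Fin n → ℤ) :=
    { toFun := fun x i => if i = i0 then x i0 - x i1 else x i
      invFun := fun x i => if i = i0 then x i0 + x i1 else x i
      left_inv := by
        intro x; funext i
        by_cases h : i = i0 <;> simp [h, hne]
      right_inv := by
        intro x; funext i
        by_cases h : i = i0 <;> simp [h, hne]
      map_add' := by
        intro x y; funext i
        by_cases h : i = i0 <;> simp [h] <;> ring
      map_smul' := by
        intro c x; funext i
        by_cases h : i = i0 <;> simp [h] <;> ring }
  let E : (Fin n → ℤ) ≃ₗ[ℤ] (Fin n → ℤ) := S ≪≫ₗ B'.equivFun.symm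
  let M : Matrix (Fin n) (Fin n) ℤ := LinearMap.toMatrix' (E : (Fin n → ℤ) →ₗ[ℤ] (Fin n → ℤ))
  have hM : ∀ x, M.mulVec x = E x := by
    intro x
    rw [← Matrix.toLin'_apply, Matrix.toLin'_toMatrix']
    rfl
  have hdet : IsUnit M.det := by
    have hMM : M * LinearMap.toMatrix' (E.symm : (Fin n → ℤ) →ₗ[ℤ] (Fin n → ℤ)) = 1 := by
      rw [← LinearMap.toMatrix'_comp]
      have : (E : (Fin n → ℤ) →ₗ[ℤ] (Fin n → ℤ)).comp
          (E.symm : (Fin n → ℤ) →ₗ[ℤ] (Fin n → ℤ)) = LinearMap.id := by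
        ext x
        simp
      rw [this, LinearMap.toMatrix'_id]
    have := congrArg Matrix.det hMM
    rw [Matrix.det_mul, Matrix.det_one] at this
    exact IsUnit.of_mul_eq_one _ this
  refine ⟨M, hdet, g, g, hgpos, hgpos, ?_⟩
  intro x
  have hEx : E x = ∑ i, S x i • B' i := by
    show B'.equivFun.symm (S x) = _
    rw [Module.Basis.equivFun_symm_apply]
  have : ∑ i, aVec i * (M.mulVec x) i = f (E x) := by rw [hM, hf]
  rw [this, hEx, map_sum]
  have hsum : ∀ i, f (S x i • B' i) = S x i * f (B' i) := by
    intro i; rw [map_smul, smul_eq_mul]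
  simp_rw [hsum]
  rw [Finset.sum_eq_single i0]
  · have hS0 : S x i0 = x i0 - x i1 := by simp [S]
    rw [hS0, hB'0, hv]
    ring
  · intro j _ hj
    have := hB'ker j hj
    rw [hK, LinearMap.mem_ker] at this
    rw [this, mul_zero]
  · simp
end

section
/- Let H be a cyclic set and κ = (I_s)_{s∈S} a combinatorial cyclic cover of H. Define J_s^{min} = (I_s − I_{s+1}) ⊔ {first hole of I_{s+1}}. Then κ^{min} = (J_s^{min})_{s∈S} is a disjoint subcover of κ, i.e., each J_s^{min} ⊆ I_s, consecutive pairs (J_s^{min}, J_{s+1}^{min}) are adjacent, and the union of the (J_s^{min} − J_{s−1}^{min}) ∩ H maps bijectively onto H. -/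
/-- the minimal subcover κ^min of a combinatorial cyclic cover is a
disjoint subcover.  The cyclic set H with k elements is modelled inside ZMod (2k)
(odd residues = holes, even residues = elements); the cyclic index set S is ZMod m.
The cover is κ = (I_s), I_s the interval starting at the hole `h s` with `a s` elements;
`b s` is the overlap length witnessing that (I_s, I_{s+1}) is linked.  The interval
J_s^min = (I_s − I_{s+1}) ⊔ {first hole of I_{s+1}} starts at `h s` and has `a s − b s`
elements.  Conclusions: J_s^min ⊆ I_s, consecutive pairs (J_s^min, J_{s+1}^min) are
adjacent, and the elements of the J_s^min partition the elements of H. -/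
theorem stmt13 (k m : ℕ) (hk : 0 < k) (hm : 0 < m)
    (h : ZMod m → ZMod (2 * k)) (a : ZMod m → ℕ)
    (hvalid : ∀ s, (h s).val % 2 = 1 ∧ a s < k)
    (b : ZMod m → ℕ)
    (hlinked : ∀ s, b s ≤ a s ∧ b s ≤ a (s + 1) ∧
      h (s + 1) = h s + ((2 * (a s - b s) : ℕ) : ZMod (2 * k)) ∧
      a s + a (s + 1) - b s ≤ k - 1)
    (hdeg1 : ∀ e : ZMod (2 * k), e.val % 2 = 0 →
      ∃! s : ZMod m,
        e ∈ (Finset.range (a s)).image (fun j => h s + ((2 * j + 1 : ℕ) : ZMod (2 * k))) ∧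
        e ∉ (Finset.range (a (s - 1))).image
          (fun j => h (s - 1) + ((2 * j + 1 : ℕ) : ZMod (2 * k)))) :
    (∀ s : ZMod m,
      (Finset.range (a s - b s)).image (fun j => h s + ((2 * j + 1 : ℕ) : ZMod (2 * k))) ⊆
        (Finset.range (a s)).image (fun j => h s + ((2 * j + 1 : ℕ) : ZMod (2 * k)))) ∧
    (∀ s : ZMod m,
      h (s + 1) = h s + ((2 * (a s - b s) : ℕ) : ZMod (2 * k)) ∧
      (a s - b s) + (a (s + 1) - b (s + 1)) ≤ k - 1) ∧
    (∀ e : ZMod (2 * k), e.val % 2 = 0 →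
      ∃! s : ZMod m, e ∈ (Finset.range (a s - b s)).image
        (fun j => h s + ((2 * j + 1 : ℕ) : ZMod (2 * k)))) := by
  haveI : NeZero (2 * k) := ⟨by omega⟩
  haveI : NeZero m := ⟨by omega⟩
  -- cast injectivity below 2k
  have castinj : ∀ x y : ℕ, x < 2 * k → y < 2 * k →
      ((x : ZMod (2 * k)) = (y : ZMod (2 * k))) → x = y := by
    intro x y hx hy hxy
    have h1 := ZMod.val_cast_of_lt hx
    have h2 := ZMod.val_cast_of_lt hy
    rw [← h1, ← h2, hxy]
  -- injectivity of the interval maps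
  have hfinj : ∀ (s : ZMod m) (i j : ℕ), i < k → j < k →
      h s + ((2 * i + 1 : ℕ) : ZMod (2 * k)) = h s + ((2 * j + 1 : ℕ) : ZMod (2 * k)) →
      i = j := by
    intro s i j hi hj hij
    have h1 : ((2 * i + 1 : ℕ) : ZMod (2 * k)) = ((2 * j + 1 : ℕ) : ZMod (2 * k)) :=
      add_left_cancel hij
    have := castinj _ _ (by omega) (by omega) h1
    omega
  -- membership characterization
  have hmem : ∀ (s : ZMod m) (n : ℕ) (e : ZMod (2 * k)),
      e ∈ (Finset.range n).image (fun j => h s + ((2 * j + 1 : ℕ) : ZMod (2 * k))) ↔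
        ∃ j, j < n ∧ h s + ((2 * j + 1 : ℕ) : ZMod (2 * k)) = e := by
    intro s n e
    simp [Finset.mem_image, Finset.mem_range]
  -- cardinality of the (partial) interval images
  have hcard : ∀ (s : ZMod m) (n : ℕ), n ≤ a s →
      ((Finset.range n).image (fun j => h s + ((2 * j + 1 : ℕ) : ZMod (2 * k)))).card = n := by
    intro s n hn
    rw [Finset.card_image_of_injOn, Finset.card_range]
    intro i hi j hj hij
    simp only [Finset.mem_coe, Finset.mem_range] at hi hj
    have hak := (hvalid s).2
    exact hfinj s i j (by omega) (by omega) hij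
  -- parity of interval elements
  have hpar : ∀ (s : ZMod m) (j : ℕ),
      (h s + ((2 * j + 1 : ℕ) : ZMod (2 * k))).val % 2 = 0 := by
    intro s j
    have hdvd : (2 : ℕ) ∣ 2 * k := ⟨k, rfl⟩
    have h1 : (h s + ((2 * j + 1 : ℕ) : ZMod (2 * k))).val =
        ((h s).val + ((2 * j + 1 : ℕ) : ZMod (2 * k)).val) % (2 * k) := ZMod.val_add _ _
    have h3 : (h s).val % 2 = 1 := (hvalid s).1
    have h6 : ((2 * j + 1 : ℕ) : ZMod (2 * k)).val % 2 = 1 := by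
      rw [ZMod.val_natCast, Nat.mod_mod_of_dvd _ hdvd]
      omega
    rw [h1, Nat.mod_mod_of_dvd _ hdvd]
    omega
  -- overlap characterization: which elements of I_{s+1} lie in I_s
  have hov : ∀ (s : ZMod m) (j : ℕ), j < a (s + 1) →
      ((h (s + 1) + ((2 * j + 1 : ℕ) : ZMod (2 * k)) ∈
        (Finset.range (a s)).image (fun i => h s + ((2 * i + 1 : ℕ) : ZMod (2 * k)))) ↔
        j < b s) := by
    intro s j hj
    obtain ⟨hb1, hb2, heq, hsumk⟩ := hlinked s
    have has := (hvalid s).2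
    have has1 := (hvalid (s + 1)).2
    have key : h (s + 1) + ((2 * j + 1 : ℕ) : ZMod (2 * k)) =
        h s + ((2 * (a s - b s + j) + 1 : ℕ) : ZMod (2 * k)) := by
      rw [heq]
      push_cast
      ring
    rw [key, hmem]
    constructor
    · rintro ⟨i, hi, hfi⟩
      have := hfinj s i (a s - b s + j) (by omega) (by omega) hfi
      omega
    · intro hjb
      exact ⟨a s - b s + j, by omega, rfl⟩
  have hba : ∀ s : ZMod m, b (s - 1) ≤ a s := by
    intro s
    have := (hlinked (s - 1)).2.1
    rwa [sub_add_cancel] at this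
  -- B: the set of elements (even residues)
  set B : Finset (ZMod (2 * k)) :=
    Finset.univ.filter (fun e : ZMod (2 * k) => e.val % 2 = 0) with hB
  have hmemB : ∀ e : ZMod (2 * k), e ∈ B ↔ e.val % 2 = 0 := by
    intro e; simp [hB]
  have hBcard : B.card = k := by
    have := Finset.card_nbij' (s := Finset.range k) (t := B)
      (fun j => ((2 * j : ℕ) : ZMod (2 * k))) (fun e => e.val / 2)
      (fun j hj => ?_) (fun e he => ?_) (fun j hj => ?_) (fun e he => ?_)
    · rw [← this, Finset.card_range]
    · rw [Finset.mem_coe]; beta_reduce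
      rw [hmemB, ZMod.val_cast_of_lt (by simp only [Finset.mem_coe, Finset.mem_range] at hj; omega)]
      omega
    · simp only [Finset.mem_coe, Finset.mem_range]
      have h1 := ZMod.val_lt e
      omega
    · simp only [Finset.mem_coe, Finset.mem_range] at hj
      beta_reduce
      rw [ZMod.val_cast_of_lt (show 2 * j < 2 * k by omega)]
      omega
    · rw [Finset.mem_coe, hmemB] at he
      have h1 := ZMod.val_lt e
      have h2 : 2 * (e.val / 2) = e.val := by omega
      beta_reduce
      rw [h2]
      exact ZMod.natCast_rightInverse e
  -- double counting
  have hcount : ∀ G : ZMod m → Finset (ZMod (2 * k)), (∀ s, G s ⊆ B) →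
      ∑ e ∈ B, (Finset.univ.filter (fun s => e ∈ G s)).card = ∑ s : ZMod m, (G s).card := by
    intro G hG
    have h1 : ∀ e : ZMod (2 * k), (Finset.univ.filter (fun s => e ∈ G s)).card =
        ∑ s : ZMod m, if e ∈ G s then 1 else 0 := fun e => Finset.card_filter _ _
    simp only [h1]
    rw [Finset.sum_comm]
    refine Finset.sum_congr rfl fun s _ => ?_
    rw [← Finset.card_filter, Finset.filter_mem_eq_inter, Finset.inter_eq_right.mpr (hG s)]
  -- the sets D s = I_s \ I_{s-1}
  set D : ZMod m → Finset (ZMod (2 * k)) := fun s =>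
    (Finset.range (a s)).image (fun j => h s + ((2 * j + 1 : ℕ) : ZMod (2 * k))) \
      (Finset.range (a (s - 1))).image (fun j => h (s - 1) + ((2 * j + 1 : ℕ) : ZMod (2 * k)))
    with hD
  have hDsub : ∀ s, D s ⊆ B := by
    intro s e he
    simp only [hD, Finset.mem_sdiff] at he
    obtain ⟨j, _, hje⟩ := (hmem s (a s) e).mp he.1
    rw [hmemB, ← hje]
    exact hpar s j
  have hDcard : ∀ s : ZMod m, (D s).card = a s - b (s - 1) := by
    intro s
    have hb := hba s
    have hint : (Finset.range (a s)).image (fun j => h s + ((2 * j + 1 : ℕ) : ZMod (2 * k))) ∩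
        (Finset.range (a (s - 1))).image
          (fun j => h (s - 1) + ((2 * j + 1 : ℕ) : ZMod (2 * k))) =
        (Finset.range (b (s - 1))).image
          (fun j => h s + ((2 * j + 1 : ℕ) : ZMod (2 * k))) := by
      ext e
      constructor
      · intro he
        rw [Finset.mem_inter] at he
        obtain ⟨he1, he2⟩ := he
        obtain ⟨j, hj, hje⟩ := (hmem s (a s) e).mp he1
        rw [hmem]
        refine ⟨j, ?_, hje⟩
        have hov' := hov (s - 1) j (by rwa [sub_add_cancel])
        rw [sub_add_cancel] at hov'
        rw [hje] at hov'
        exact hov'.mp he2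
      · intro he
        obtain ⟨j, hj, hje⟩ := (hmem s (b (s - 1)) e).mp he
        rw [Finset.mem_inter]
        refine ⟨(hmem s (a s) e).mpr ⟨j, by omega, hje⟩, ?_⟩
        have hov' := hov (s - 1) j (by rw [sub_add_cancel]; omega)
        rw [sub_add_cancel] at hov'
        rw [hje] at hov'
        exact hov'.mpr hj
    have hic := Finset.card_sdiff_add_card_inter
      ((Finset.range (a s)).image (fun j => h s + ((2 * j + 1 : ℕ) : ZMod (2 * k))))
      ((Finset.range (a (s - 1))).image (fun j => h (s - 1) + ((2 * j + 1 : ℕ) : ZMod (2 * k))))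
    rw [hint, hcard s (b (s - 1)) hb, hcard s (a s) le_rfl] at hic
    simp only [hD]
    omega
  -- the D s partition B (by hdeg1), so their cards sum to k
  have hsumD : ∑ s : ZMod m, (a s - b (s - 1)) = k := by
    have h1 := hcount D hDsub
    have h2 : ∀ e ∈ B, (Finset.univ.filter (fun s => e ∈ D s)).card = 1 := by
      intro e he
      obtain ⟨s₀, hs₀, huniq⟩ := hdeg1 e ((hmemB e).mp he)
      rw [Finset.card_eq_one]
      refine ⟨s₀, ?_⟩
      ext t
      simp only [Finset.mem_filter, Finset.mem_univ, true_and, Finset.mem_singleton, hD,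
        Finset.mem_sdiff]
      constructor
      · intro ht; exact huniq t ht
      · rintro rfl; exact hs₀
    rw [Finset.sum_congr rfl h2] at h1
    simp only [Finset.sum_const, smul_eq_mul, mul_one] at h1
    calc ∑ s : ZMod m, (a s - b (s - 1)) = ∑ s : ZMod m, (D s).card :=
          Finset.sum_congr rfl fun s _ => (hDcard s).symm
      _ = B.card := by rw [← h1]
      _ = k := hBcard
  -- hence the lengths of the J s also sum to k
  have hsum_d : ∑ s : ZMod m, (a s - b s) = k := by
    have hz1 : (↑(∑ s : ZMod m, (a s - b (s - 1))) : ℤ) =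
        ∑ s : ZMod m, ((a s : ℤ) - (b (s - 1) : ℤ)) := by
      rw [Nat.cast_sum]
      exact Finset.sum_congr rfl fun s _ => by rw [Nat.cast_sub (hba s)]
    have hz2 : (↑(∑ s : ZMod m, (a s - b s)) : ℤ) =
        ∑ s : ZMod m, ((a s : ℤ) - (b s : ℤ)) := by
      rw [Nat.cast_sum]
      exact Finset.sum_congr rfl fun s _ => by rw [Nat.cast_sub (hlinked s).1]
    have hz3 : ∑ s : ZMod m, ((b (s - 1) : ℤ)) = ∑ s : ZMod m, (b s : ℤ) :=
      Fintype.sum_equiv (Equiv.subRight (1 : ZMod m)) _ _ (fun t => rfl)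
    have hz : (↑(∑ s : ZMod m, (a s - b s)) : ℤ) =
        (↑(∑ s : ZMod m, (a s - b (s - 1))) : ℤ) := by
      rw [hz1, hz2, Finset.sum_sub_distrib, Finset.sum_sub_distrib, hz3]
    rw [hsumD] at hz
    exact_mod_cast hz
  -- telescoping the hole positions
  have htel : ∀ (s : ZMod m) (n : ℕ), h (s + (n : ZMod m)) =
      h s + ((2 * ∑ l ∈ Finset.range n, (a (s + (l : ZMod m)) - b (s + (l : ZMod m))) : ℕ) :
        ZMod (2 * k)) := by
    intro s n
    induction n with
    | zero => simp
    | succ n ih =>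
      have hstep := (hlinked (s + (n : ZMod m))).2.2.1
      have hcast : ((n + 1 : ℕ) : ZMod m) = (n : ZMod m) + 1 := by push_cast; ring
      rw [hcast, ← add_assoc, hstep, ih, Finset.sum_range_succ]
      push_cast
      ring
  -- sums over a cyclic shift of indices
  have hsum_range : ∀ (s : ZMod m) (g : ZMod m → ℕ),
      ∑ l ∈ Finset.range m, g (s + (l : ZMod m)) = ∑ t : ZMod m, g t := by
    intro s g
    refine Finset.sum_nbij' (fun l => s + (l : ZMod m)) (fun t => (t - s).val) ?_ ?_ ?_ ?_ ?_
    · intro l _; exact Finset.mem_univ _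
    · intro t _; exact Finset.mem_range.mpr (ZMod.val_lt _)
    · intro l hl
      simp only [add_sub_cancel_left]
      rw [ZMod.val_natCast]
      exact Nat.mod_eq_of_lt (Finset.mem_range.mp hl)
    · intro t _
      have h1 : (((t - s).val : ℕ) : ZMod m) = t - s := ZMod.natCast_rightInverse _
      beta_reduce
      rw [h1]; ring
    · intro l _; rfl
  -- locating the step of the minimal subcover containing a given index
  have hfind : ∀ (Sd : ℕ → ℕ) (j : ℕ), Sd 0 = 0 → j < Sd m →
      ∃ n, Sd n ≤ j ∧ j < Sd (n + 1) := by
    intro Sd j h0 hm'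
    have hex : ∃ n, j < Sd (n + 1) := ⟨m - 1, by
      have hmm : m - 1 + 1 = m := by omega
      rw [hmm]; exact hm'⟩
    refine ⟨Nat.find hex, ?_, Nat.find_spec hex⟩
    rcases Nat.eq_zero_or_pos (Nat.find hex) with h0' | h0'
    · rw [h0', h0]; exact Nat.zero_le j
    · have hmin := Nat.find_min hex (show Nat.find hex - 1 < Nat.find hex by omega)
      have hn : Nat.find hex - 1 + 1 = Nat.find hex := by omega
      rw [hn] at hmin
      omega
  -- existence: every element lies in some J s
  have hexist : ∀ e ∈ B, ∃ s : ZMod m, e ∈ (Finset.range (a s - b s)).image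
      (fun j => h s + ((2 * j + 1 : ℕ) : ZMod (2 * k))) := by
    intro e heB
    obtain ⟨s, ⟨he1, _⟩, _⟩ := hdeg1 e ((hmemB e).mp heB)
    obtain ⟨j, hj, hje⟩ := (hmem s (a s) e).mp he1
    have hjk : j < k := lt_trans hj (hvalid s).2
    obtain ⟨n, hn1, hn2⟩ := hfind
      (fun n => ∑ l ∈ Finset.range n, (a (s + (l : ZMod m)) - b (s + (l : ZMod m)))) j
      (by simp) (by beta_reduce; rw [hsum_range s (fun t => a t - b t)]; rw [hsum_d]; exact hjk)
    rw [Finset.sum_range_succ] at hn2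
    refine ⟨s + (n : ZMod m), (hmem _ _ e).mpr ⟨j - ∑ l ∈ Finset.range n,
      (a (s + (l : ZMod m)) - b (s + (l : ZMod m))), by omega, ?_⟩⟩
    rw [htel s n, ← hje, add_assoc, ← Nat.cast_add]
    congr 2
    omega
  -- the J s are also subsets of B
  have hJsub : ∀ s : ZMod m, (Finset.range (a s - b s)).image
      (fun j => h s + ((2 * j + 1 : ℕ) : ZMod (2 * k))) ⊆ B := by
    intro s e he
    obtain ⟨j, _, hje⟩ := (hmem s (a s - b s) e).mp he
    rw [hmemB, ← hje]
    exact hpar s j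
  -- every element lies in exactly one J s
  have hJone : ∀ e ∈ B, (Finset.univ.filter (fun s : ZMod m => e ∈
      (Finset.range (a s - b s)).image
        (fun j => h s + ((2 * j + 1 : ℕ) : ZMod (2 * k))))).card = 1 := by
    have hle : ∀ e ∈ B, 1 ≤ (Finset.univ.filter (fun s : ZMod m => e ∈
        (Finset.range (a s - b s)).image
          (fun j => h s + ((2 * j + 1 : ℕ) : ZMod (2 * k))))).card := by
      intro e he
      obtain ⟨s, hs⟩ := hexist e he
      exact Finset.card_pos.mpr ⟨s, Finset.mem_filter.mpr ⟨Finset.mem_univ _, hs⟩⟩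
    have hsum : ∑ e ∈ B, (1 : ℕ) = ∑ e ∈ B, (Finset.univ.filter (fun s : ZMod m => e ∈
        (Finset.range (a s - b s)).image
          (fun j => h s + ((2 * j + 1 : ℕ) : ZMod (2 * k))))).card := by
      rw [hcount (fun s => (Finset.range (a s - b s)).image
        (fun j => h s + ((2 * j + 1 : ℕ) : ZMod (2 * k)))) hJsub]
      rw [Finset.sum_congr rfl (fun s _ => hcard s (a s - b s) (Nat.sub_le _ _))]
      simp only [Finset.sum_const, smul_eq_mul, mul_one]
      rw [hBcard, hsum_d]
    intro e he
    exact (((Finset.sum_eq_sum_iff_of_le hle).mp hsum) e he).symm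
  refine ⟨fun s => Finset.image_subset_image (Finset.range_subset_range.mpr (Nat.sub_le _ _)),
    fun s => ?_, fun e he => ?_⟩
  · obtain ⟨hb1, hb2, heq, hsumk⟩ := hlinked s
    exact ⟨heq, by omega⟩
  · have heB : e ∈ B := (hmemB e).mpr he
    have h1 := hJone e heB
    rw [Finset.card_eq_one] at h1
    obtain ⟨s₀, hs₀⟩ := h1
    have hs₀mem : s₀ ∈ Finset.univ.filter (fun s : ZMod m => e ∈
        (Finset.range (a s - b s)).image
          (fun j => h s + ((2 * j + 1 : ℕ) : ZMod (2 * k)))) := by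
      rw [hs₀]; exact Finset.mem_singleton_self _
    refine ⟨s₀, (Finset.mem_filter.mp hs₀mem).2, ?_⟩
    intro t ht
    have hts : t ∈ ({s₀} : Finset (ZMod m)) := by
      rw [← hs₀]; exact Finset.mem_filter.mpr ⟨Finset.mem_univ _, ht⟩
    exact Finset.mem_singleton.mp hts
end

section
/- Let G be a group with subgroups G_A, G_B, G_{AB}, G_{BC}, G_{ABC} such that the multiplication maps G_A × G_B → G_{AB}, G_B × G_C → G_{BC}, and G_{AB} × G_C → G_{ABC} (equivalently G_A × G_{BC} → G_{ABC}) are bijections. Then the map G_{AB} ×_{G_B} G_{BC} → G_{ABC} induced by (g, h) ↦ g·h descends from the quotient of G_{AB} × G_{BC} by the free action b·(g,h) = (g·b⁻¹, b·h) of G_B, and is a bijection. -/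
/-- if the multiplication maps G_A × G_B → G_AB, G_B × G_C → G_BC,
G_AB × G_C → G_ABC (equivalently G_A × G_BC → G_ABC) are bijections, then the map
G_AB ×_{G_B} G_BC → G_ABC induced by (g,h) ↦ g·h descends from the quotient by the
twisted free G_B-action b·(g,h) = (g·b⁻¹, b·h) and is a bijection: multiplication lands
in G_ABC, is surjective onto G_ABC, and its fibers are exactly the G_B-orbits. -/
theorem stmt15 {G : Type*} [Group G] (GA GB GC GAB GBC GABC : Subgroup G)
    (hBAB : GB ≤ GAB) (hBBC : GB ≤ GBC)
    (hABc : ∀ x ∈ GA, ∀ y ∈ GB, x * y ∈ GAB)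
    (hABu : ∀ x ∈ GAB, ∃! p : GA × GB, (p.1 : G) * (p.2 : G) = x)
    (hBCc : ∀ x ∈ GB, ∀ y ∈ GC, x * y ∈ GBC)
    (hBCu : ∀ x ∈ GBC, ∃! p : GB × GC, (p.1 : G) * (p.2 : G) = x)
    (hABCc : ∀ x ∈ GAB, ∀ y ∈ GC, x * y ∈ GABC)
    (hABCu : ∀ x ∈ GABC, ∃! p : GAB × GC, (p.1 : G) * (p.2 : G) = x)
    (hABCc' : ∀ x ∈ GA, ∀ y ∈ GBC, x * y ∈ GABC)
    (hABCu' : ∀ x ∈ GABC, ∃! p : GA × GBC, (p.1 : G) * (p.2 : G) = x) :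
    (∀ (g : GAB) (h : GBC), (g : G) * (h : G) ∈ GABC) ∧
    (∀ x ∈ GABC, ∃ (g : GAB) (h : GBC), (g : G) * (h : G) = x) ∧
    (∀ (g g' : GAB) (h h' : GBC), ((g : G) * (h : G) = (g' : G) * (h' : G) ↔
      ∃ b ∈ GB, (g' : G) = (g : G) * b⁻¹ ∧ (h' : G) = b * (h : G))) := by
  refine ⟨?_, ?_, ?_⟩
  · intro g h
    obtain ⟨⟨a, b⟩, hab, -⟩ := hABu g g.2
    have hbh : (b : G) * h ∈ GBC := GBC.mul_mem (hBBC b.2) h.2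
    have := hABCc' a a.2 _ hbh
    simpa [← hab, mul_assoc] using this
  · intro x hx
    obtain ⟨⟨a, y⟩, hay, -⟩ := hABCu' x hx
    have haAB : (a : G) ∈ GAB := by simpa using hABc a a.2 1 GB.one_mem
    exact ⟨⟨a, haAB⟩, y, hay⟩
  · intro g g' h h'
    constructor
    · intro heq
      obtain ⟨⟨a, b⟩, hab, -⟩ := hABu g g.2
      obtain ⟨⟨a', b'⟩, hab', -⟩ := hABu g' g'.2
      have hbh : (b : G) * h ∈ GBC := GBC.mul_mem (hBBC b.2) h.2
      have hbh' : (b' : G) * h' ∈ GBC := GBC.mul_mem (hBBC b'.2) h'.2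
      have hmem : (g : G) * h ∈ GABC := by
        have := hABCc' a a.2 _ hbh
        simpa [← hab, mul_assoc] using this
      obtain ⟨p0, -, huniq⟩ := hABCu' _ hmem
      have h1 : (⟨a, ⟨_, hbh⟩⟩ : GA × GBC) = ⟨a', ⟨_, hbh'⟩⟩ := by
        rw [huniq ⟨a, ⟨_, hbh⟩⟩ (by simp [← mul_assoc, hab]),
          huniq ⟨a', ⟨_, hbh'⟩⟩ (by simp [← mul_assoc, hab', ← heq])]
      have ha : (a : G) = a' := congrArg (fun p => ((p.1 : G)) ) h1
      have hy : (b : G) * h = (b' : G) * h' := by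
        have := congrArg (fun p : GA × GBC => (p.2 : G)) h1
        simpa using this
      refine ⟨(b' : G)⁻¹ * b, GB.mul_mem (GB.inv_mem b'.2) b.2, ?_, ?_⟩
      · rw [mul_inv_rev, inv_inv, ← hab, ← hab', ha]
        group
      · rw [mul_assoc, hy, ← mul_assoc, inv_mul_cancel, one_mul]
    · rintro ⟨b, hb, h1, h2⟩
      rw [h1, h2]
      group
end
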